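/- arXiv:2504.07295 — 3 statements merged into one kernel-verified Lean document; each statement's English description precedes it below -/
import Mathlib

section
/- Convolution identity for divided differences of the exponential: for real β > 0 and points x₀,...,x_q (0 ≤ j < q), ∫₀^β e^{−τ[x_{j+1},...,x_q]} · e^{−(β−τ)[x₀,...,x_j]} dτ = −e^{−β[x₀,...,x_q]}, where e^{−t[y₀,...,y_m]} denotes the divided difference of x ↦ e^{−tx} over the points y_i. -/
/-- Complete homogeneous symmetric polynomial of degree `m` evaluated on a list. -/
noncomputable def hSym (m : ℕ) (xs : List ℂ) : ℂ :=
  ∑ k ∈ Finset.Nat.antidiagonalTuple xs.length m, ∏ i : Fin xs.length, xs.get i ^ k i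

/-- Divided difference of an entire function over a list of points (multisets allowed),
via the series `f[x₀,...,x_q] = Σ_m f^{(q+m)}(0)/(q+m)! · h_m(x₀,...,x_q)`. -/
noncomputable def divDiff (f : ℂ → ℂ) (xs : List ℂ) : ℂ :=
  ∑' m : ℕ, iteratedDeriv (xs.length - 1 + m) f 0 /
    (Nat.factorial (xs.length - 1 + m) : ℂ) * hSym m xs

/-- Divided difference of the exponential `x ↦ exp (t * x)` over a list of points. -/
noncomputable def expDD (t : ℂ) (xs : List ℂ) : ℂ :=
  divDiff (fun z => Complex.exp (t * z)) xs

/-! With `n = xs.length`, `expDD t xs = ∑ₘ hₘ(xs) tⁿ⁻¹⁺ᵐ / (n - 1 + m)!` is an `(n - 1)`-fold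
antiderivative of the Borel transform of `H_xs = ∏ᵢ 1 / (1 - xᵢ X) = ∑ₘ hₘ(xs) Xᵐ`. Multiplying the
two series and integrating term by term (dominated convergence, as `|hₘ(xs)| ≤ (2ⁿ M)ᵐ`), every
term is a Beta integral `z ∫₀^β (zτ)ᵃ/a! (z(β - τ))ᵇ/b! dτ = (zβ)ᵃ⁺ᵇ⁺¹/(a + b + 1)!`, and collecting
terms of equal degree produces the coefficients of `H_L H_R = H_{L ++ R}`. This gives
`z ∫₀^β e^{zτ[R]} e^{z(β-τ)[L]} dτ = e^{zβ[L ++ R]}` for every `z`; the theorem is `z = -1`. -/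

open Finset MeasureTheory
open scoped Nat

lemma hSym_nil (m : ℕ) : hSym m [] = if m = 0 then 1 else 0 := by
  cases m <;> simp [hSym]

lemma hSym_cons (a : ℂ) (xs : List ℂ) (m : ℕ) :
    hSym m (a :: xs) = ∑ p ∈ antidiagonal m, a ^ p.1 * hSym p.2 xs := by
  simp only [hSym, mul_sum, List.length_cons]
  rw [sum_sigma']
  refine sum_nbij'
    (fun k : Fin (xs.length + 1) → ℕ => ⟨(k 0, ∑ i : Fin xs.length, k i.succ), Fin.tail k⟩)
    (fun p => Fin.cons p.1.1 p.2) ?_ ?_ ?_ ?_ ?_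
  · intro k hk
    simp only [mem_sigma, HasAntidiagonal.mem_antidiagonal, Nat.mem_antidiagonalTuple] at hk ⊢
    exact ⟨by rw [← hk, Fin.sum_univ_succ], rfl⟩
  · rintro ⟨⟨i, j⟩, k⟩ h
    simp only [mem_sigma, HasAntidiagonal.mem_antidiagonal, Nat.mem_antidiagonalTuple] at h ⊢
    rw [Fin.sum_cons, h.2, h.1]
  · intro k _
    simp
  · rintro ⟨⟨i, j⟩, k⟩ h
    simp only [mem_sigma, HasAntidiagonal.mem_antidiagonal, Nat.mem_antidiagonalTuple] at h
    simp [h.2]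
  · intro k _
    simp [Fin.prod_univ_succ, Fin.tail]

noncomputable def hSymSeries (xs : List ℂ) : PowerSeries ℂ := PowerSeries.mk fun m => hSym m xs

lemma hSymSeries_nil : hSymSeries [] = 1 := by
  ext m
  simp [hSymSeries, hSym_nil, PowerSeries.coeff_one]

lemma hSymSeries_cons (a : ℂ) (xs : List ℂ) :
    hSymSeries (a :: xs) = PowerSeries.mk (a ^ ·) * hSymSeries xs := by
  ext m
  simp [hSymSeries, hSym_cons, PowerSeries.coeff_mul]

lemma hSymSeries_append (L R : List ℂ) : hSymSeries (L ++ R) = hSymSeries L * hSymSeries R := by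
  induction L with
  | nil => rw [List.nil_append, hSymSeries_nil, one_mul]
  | cons a L ih => rw [List.cons_append, hSymSeries_cons, ih, hSymSeries_cons, mul_assoc]

lemma norm_hSym_le {M : ℝ} (hM₀ : 0 ≤ M) (xs : List ℂ) (hM : ∀ x ∈ xs, ‖x‖ ≤ M) (m : ℕ) :
    ‖hSym m xs‖ ≤ (2 ^ xs.length * M) ^ m := by
  induction xs generalizing m with
  | nil => rcases m with _ | m <;> simp [hSym_nil, hM₀]
  | cons a xs ih =>
    have hM' : M ≤ 2 ^ xs.length * M := le_mul_of_one_le_left hM₀ (one_le_pow₀ one_le_two)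
    have ha : ‖a‖ ≤ 2 ^ xs.length * M := (hM a List.mem_cons_self).trans hM'
    calc ‖hSym m (a :: xs)‖
        ≤ ∑ p ∈ antidiagonal m, (2 ^ xs.length * M) ^ p.1 * (2 ^ xs.length * M) ^ p.2 := by
          rw [hSym_cons]
          refine (norm_sum_le _ _).trans (sum_le_sum fun p _ => ?_)
          rw [norm_mul, norm_pow]
          exact mul_le_mul (pow_le_pow_left₀ (norm_nonneg a) ha _)
            (ih (fun x hx => hM x (List.mem_cons_of_mem a hx)) p.2) (norm_nonneg _)
            (by positivity)
      _ = (m + 1) * (2 ^ xs.length * M) ^ m := by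
          rw [sum_congr rfl fun p hp => by rw [← pow_add, HasAntidiagonal.mem_antidiagonal.mp hp],
            sum_const, Nat.card_antidiagonal, nsmul_eq_mul]
          push_cast; ring
      _ ≤ 2 ^ m * (2 ^ xs.length * M) ^ m := by
          gcongr
          exact_mod_cast Nat.lt_two_pow_self
      _ = (2 ^ (a :: xs).length * M) ^ m := by
          rw [List.length_cons, ← mul_pow]; ring

lemma mul_integral_pow_mul_pow_div_factorial (z : ℂ) {β : ℝ} (hβ : 0 < β) (a b : ℕ) :
    z * ∫ τ in (0 : ℝ)..β, (z * τ) ^ a / a ! * ((z * (β - τ)) ^ b / b !)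
      = (z * β) ^ (a + b + 1) / (a + b + 1)! := by
  have hbeta := Complex.betaIntegral_scaled (a + 1) (b + 1) hβ
  have hsum : ((a : ℂ) + 1) + (b + 1) = (a + b + 1 : ℕ) + 1 := by push_cast; ring
  rw [Complex.betaIntegral_eq_Gamma_mul_div _ _ (by simp; positivity) (by simp; positivity),
    hsum, add_sub_cancel_right, add_sub_cancel_right, add_sub_cancel_right] at hbeta
  simp only [Complex.cpow_natCast, Complex.Gamma_nat_eq_factorial] at hbeta
  have ha : (a ! : ℂ) ≠ 0 := by exact_mod_cast a.factorial_ne_zero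
  have hb : (b ! : ℂ) ≠ 0 := by exact_mod_cast b.factorial_ne_zero
  simp_rw [mul_pow, div_mul_div_comm, mul_mul_mul_comm, intervalIntegral.integral_div,
    intervalIntegral.integral_const_mul, hbeta]
  field_simp
  ring

lemma norm_mul_pow_div_factorial (c t : ℂ) (n : ℕ) :
    ‖c * t ^ n / (n ! : ℂ)‖ = ‖c‖ * ‖t‖ ^ n / n ! := by
  rw [norm_div, norm_mul, norm_pow, Complex.norm_natCast]

/-- The Borel transform `t ↦ ∑ₘ fₘ tᵐ / m!` of `f` converges absolutely on all of `ℂ`. -/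
def HasEntireBorelTransform (f : PowerSeries ℂ) : Prop :=
  ∀ r : ℝ, Summable fun m => ‖PowerSeries.coeff m f‖ * r ^ m / m !

/-- The `k`-fold antiderivative, vanishing at `0`, of the Borel transform of `f`. -/
noncomputable def shiftedBorel (k : ℕ) (f : PowerSeries ℂ) (t : ℂ) : ℂ :=
  ∑' m, PowerSeries.coeff m f * t ^ (k + m) / (k + m)!

lemma hasEntireBorelTransform_hSymSeries (xs : List ℂ) :
    HasEntireBorelTransform (hSymSeries xs) := by
  intro r
  simp only [hSymSeries, PowerSeries.coeff_mk]
  set M := (xs.map (‖·‖)).sum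
  have hM : ∀ x ∈ xs, ‖x‖ ≤ M := fun x hx =>
    List.single_le_sum (by simp) _ (List.mem_map_of_mem hx)
  have hM₀ : 0 ≤ M := List.sum_nonneg (by simp)
  refine .of_norm_bounded (Real.summable_pow_div_factorial (2 ^ xs.length * M * |r|)) fun m => ?_
  rw [Real.norm_eq_abs, abs_div, abs_mul, abs_pow, abs_norm, Nat.abs_cast, mul_pow]
  gcongr
  exact norm_hSym_le hM₀ xs hM m

section shiftedBorel

variable {f g : PowerSeries ℂ}

lemma summable_norm_coeff_mul_pow_div_factorial_add
    (hf : HasEntireBorelTransform f) (k : ℕ) {r : ℝ} (hr : 0 ≤ r) :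
    Summable fun m => ‖PowerSeries.coeff m f‖ * r ^ (k + m) / (k + m)! := by
  refine ((hf r).mul_left (r ^ k)).of_nonneg_of_le (fun m => by positivity) fun m => ?_
  calc ‖PowerSeries.coeff m f‖ * r ^ (k + m) / (k + m)!
      = r ^ k * (‖PowerSeries.coeff m f‖ * r ^ m / (k + m)!) := by ring
    _ ≤ r ^ k * (‖PowerSeries.coeff m f‖ * r ^ m / m !) := by
      gcongr
      exact Nat.le_add_left m k

lemma hasSum_shiftedBorel_mul_shiftedBorel
    (hf : HasEntireBorelTransform f) (hg : HasEntireBorelTransform g)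
    (a b : ℕ) (s t : ℂ) :
    HasSum (fun p => ∑ ij ∈ antidiagonal p,
        PowerSeries.coeff ij.1 f * s ^ (a + ij.1) / (a + ij.1)! *
          (PowerSeries.coeff ij.2 g * t ^ (b + ij.2) / (b + ij.2)!))
      (shiftedBorel a f s * shiftedBorel b g t) := by
  have hs : Summable fun i => ‖PowerSeries.coeff i f * s ^ (a + i) / (a + i)!‖ := by
    simpa only [norm_mul_pow_div_factorial] using
      summable_norm_coeff_mul_pow_div_factorial_add hf a (norm_nonneg s)
  have ht : Summable fun j => ‖PowerSeries.coeff j g * t ^ (b + j) / (b + j)!‖ := by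
    simpa only [norm_mul_pow_div_factorial] using
      summable_norm_coeff_mul_pow_div_factorial_add hg b (norm_nonneg t)
  rw [shiftedBorel, shiftedBorel, tsum_mul_tsum_eq_tsum_sum_antidiagonal_of_summable_norm hs ht]
  exact (summable_norm_sum_mul_antidiagonal_of_summable_norm hs ht).of_norm.hasSum

lemma mul_integral_sum_antidiagonal_eq_coeff_mul (z : ℂ) {β : ℝ} (hβ : 0 < β) (a b p : ℕ) :
    z * ∫ τ in (0 : ℝ)..β, ∑ ij ∈ antidiagonal p,
        PowerSeries.coeff ij.1 f * (z * τ) ^ (a + ij.1) / (a + ij.1)! *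
          (PowerSeries.coeff ij.2 g * (z * (β - τ)) ^ (b + ij.2) / (b + ij.2)!)
      = PowerSeries.coeff p (f * g) * (z * β) ^ (a + b + 1 + p) / (a + b + 1 + p)! := by
  rw [intervalIntegral.integral_finsetSum fun ij _ =>
    (Continuous.intervalIntegrable (by fun_prop) _ _), mul_sum,
    PowerSeries.coeff_mul, sum_mul, sum_div]
  refine sum_congr rfl fun ij hij => ?_
  have hexp : a + ij.1 + (b + ij.2) + 1 = a + b + 1 + p := by
    rw [← HasAntidiagonal.mem_antidiagonal.mp hij]; ring
  simp_rw [mul_div_assoc, mul_mul_mul_comm _ (_ / _), intervalIntegral.integral_const_mul,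
    mul_left_comm z, mul_integral_pow_mul_pow_div_factorial z hβ, hexp]

lemma norm_sum_antidiagonal_le {s t : ℂ} {r : ℝ} (hs : ‖s‖ ≤ r) (ht : ‖t‖ ≤ r) (a b p : ℕ) :
    ‖∑ ij ∈ antidiagonal p,
        PowerSeries.coeff ij.1 f * s ^ (a + ij.1) / (a + ij.1)! *
          (PowerSeries.coeff ij.2 g * t ^ (b + ij.2) / (b + ij.2)!)‖
      ≤ ∑ ij ∈ antidiagonal p,
        ‖PowerSeries.coeff ij.1 f‖ * r ^ (a + ij.1) / (a + ij.1)! *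
          (‖PowerSeries.coeff ij.2 g‖ * r ^ (b + ij.2) / (b + ij.2)!) := by
  refine (norm_sum_le _ _).trans (sum_le_sum fun ij _ => ?_)
  have hr : 0 ≤ r := (norm_nonneg s).trans hs
  rw [norm_mul, norm_mul_pow_div_factorial, norm_mul_pow_div_factorial]
  gcongr

lemma summable_sum_antidiagonal_norm_mul_pow_div_factorial
    (hf : HasEntireBorelTransform f) (hg : HasEntireBorelTransform g)
    {r : ℝ} (hr : 0 ≤ r) (a b : ℕ) :
    Summable fun p => ∑ ij ∈ antidiagonal p,
        ‖PowerSeries.coeff ij.1 f‖ * r ^ (a + ij.1) / (a + ij.1)! *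
          (‖PowerSeries.coeff ij.2 g‖ * r ^ (b + ij.2) / (b + ij.2)!) :=
  summable_sum_mul_antidiagonal_of_summable_mul
    (f := fun i => ‖PowerSeries.coeff i f‖ * r ^ (a + i) / (a + i)!)
    (g := fun j => ‖PowerSeries.coeff j g‖ * r ^ (b + j) / (b + j)!) <|
    (summable_norm_coeff_mul_pow_div_factorial_add hf a hr).mul_of_nonneg
      (summable_norm_coeff_mul_pow_div_factorial_add hg b hr)
      (fun _ => by positivity) (fun _ => by positivity)

lemma norm_mul_le_of_mem_uIoc (z : ℂ) {β τ : ℝ} (hβ : 0 ≤ β) (hτ : τ ∈ Set.uIoc 0 β) :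
    ‖z * τ‖ ≤ ‖z‖ * β ∧ ‖z * (β - τ)‖ ≤ ‖z‖ * β := by
  rw [Set.uIoc_of_le hβ, Set.mem_Ioc] at hτ
  have hτβ : ‖((β - τ : ℝ) : ℂ)‖ ≤ β := by
    rw [Complex.norm_real, Real.norm_of_nonneg (by linarith)]
    linarith
  rw [Complex.ofReal_sub] at hτβ
  refine ⟨?_, ?_⟩ <;> rw [norm_mul] <;> gcongr
  rw [Complex.norm_real, Real.norm_of_nonneg hτ.1.le]
  exact hτ.2

theorem mul_integral_shiftedBorel_mul_shiftedBorel
    (hf : HasEntireBorelTransform f) (hg : HasEntireBorelTransform g)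
    (z : ℂ) {β : ℝ} (hβ : 0 < β) (a b : ℕ) :
    z * ∫ τ in (0 : ℝ)..β, shiftedBorel a f (z * τ) * shiftedBorel b g (z * (β - τ))
      = shiftedBorel (a + b + 1) (f * g) (z * β) := by
  have hsum := intervalIntegral.hasSum_integral_of_dominated_convergence (μ := volume) _
    (fun p => (Continuous.aestronglyMeasurable (by fun_prop)))
    (fun p => .of_forall fun τ hτ =>
      norm_sum_antidiagonal_le (norm_mul_le_of_mem_uIoc z hβ.le hτ).1
        (norm_mul_le_of_mem_uIoc z hβ.le hτ).2 a b p)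
    (.of_forall fun _ _ =>
      summable_sum_antidiagonal_norm_mul_pow_div_factorial hf hg (by positivity) a b)
    intervalIntegrable_const
    (.of_forall fun τ _ =>
      hasSum_shiftedBorel_mul_shiftedBorel hf hg a b (z * τ) (z * (β - τ)))
  rw [← (hsum.mul_left z).tsum_eq, shiftedBorel]
  exact tsum_congr (mul_integral_sum_antidiagonal_eq_coeff_mul z hβ a b)

end shiftedBorel

lemma expDD_eq_shiftedBorel (t : ℂ) (xs : List ℂ) :
    expDD t xs = shiftedBorel (xs.length - 1) (hSymSeries xs) t := by
  simp only [expDD, divDiff, shiftedBorel, hSymSeries, PowerSeries.coeff_mk,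
    iteratedDeriv_cexp_const_mul, mul_zero, Complex.exp_zero, mul_one]
  exact tsum_congr fun m => by ring

theorem mul_integral_expDD_mul_expDD (z : ℂ) {β : ℝ} (hβ : 0 < β) {L R : List ℂ} (hL : L ≠ [])
    (hR : R ≠ []) :
    z * ∫ τ in (0 : ℝ)..β, expDD (z * τ) R * expDD (z * (β - τ)) L = expDD (z * β) (L ++ R) := by
  have hlen : (L ++ R).length - 1 = R.length - 1 + (L.length - 1) + 1 := by
    have := List.length_pos_iff.mpr hL
    have := List.length_pos_iff.mpr hR
    rw [List.length_append]
    omega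
  simp only [expDD_eq_shiftedBorel, hlen, hSymSeries_append, mul_comm (hSymSeries L)]
  exact mul_integral_shiftedBorel_mul_shiftedBorel (hasEntireBorelTransform_hSymSeries R)
    (hasEntireBorelTransform_hSymSeries L) z hβ _ _

/-- Convolution identity for divided differences of the exponential:
`∫₀^β e^{−τ[x_{j+1},...,x_q]} e^{−(β−τ)[x₀,...,x_j]} dτ = −e^{−β[x₀,...,x_q]}`. -/
theorem expDD_convolution (β : ℝ) (hβ : 0 < β) (q j : ℕ) (hj : j < q)
    (x : Fin (q + 1) → ℂ) :
    ∫ τ in (0:ℝ)..β,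
        expDD (-(τ : ℂ)) (List.ofFn fun i : Fin (q - j) =>
          x ⟨j + 1 + i.val, by have := i.isLt; omega⟩) *
        expDD (-((β : ℂ) - (τ : ℂ))) (List.ofFn fun i : Fin (j + 1) =>
          x ⟨i.val, by have := i.isLt; omega⟩)
      = - expDD (-(β : ℂ)) (List.ofFn x) := by
  have hsplit : List.ofFn x
      = (List.ofFn fun i : Fin (j + 1) => x ⟨i.val, by have := i.isLt; omega⟩)
        ++ (List.ofFn fun i : Fin (q - j) => x ⟨j + 1 + i.val, by have := i.isLt; omega⟩) := by
    rw [List.ofFn_congr (by omega : q + 1 = (j + 1) + (q - j)), List.ofFn_add]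
    rfl
  rw [hsplit, ← neg_one_mul (β : ℂ), ← mul_integral_expDD_mul_expDD (-1) hβ ?_ ?_]
  · simp only [neg_one_mul, neg_neg]
  · simp
  · simpa using Nat.sub_ne_zero_of_lt hj
end

section
/- Frequency-shift identity: for t > 0 and points x₀,...,x_j, t · e^{−t[x₀,...,x_j]} = −Σ_{m=0}^{j} e^{−t[x₀,...,x_j,x_m]}, where e^{−t[⋯]} denotes the divided difference of x ↦ e^{−tx} over the listed points (with x_m repeated). -/
/-!
Write `h_n` for the complete homogeneous polynomials, so that
`f[x₀,…,x_q] = Σ_n f^{(q+n)}(0)/(q+n)! · h_n(x)`. A monomial `x^κ` of degree `n` occurs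
in `h_n(x, x_m)` with multiplicity `κ_m + 1`, hence `Σ_m h_n(x, x_m) = (q + 1 + n) · h_n(x)`.
This factor cancels against `(q + 1 + n)!` and shifts the derivative, giving
`Σ_m f[x, x_m] = f'[x]`.
For `f = exp (c ·)` we have `f' = c f`, and `c = -t` gives the identity.
-/

open Finset

theorem List.ofFn_append_singleton {α : Type*} {N : ℕ} (x : Fin N → α) (y : α) :
    List.ofFn x ++ [y] = List.ofFn (Fin.snoc x y) := by
  rw [List.ofFn_succ_last]
  simp

theorem Pi.single_le_iff {ι M : Type*} [DecidableEq ι] [AddMonoid M] [PartialOrder M]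
    [CanonicallyOrderedAdd M] {k : ι → M} {m : ι} {a : M} : Pi.single m a ≤ k ↔ a ≤ k m := by
  refine ⟨fun h => by simpa using h m, fun h i => ?_⟩
  rcases eq_or_ne i m with rfl | hi
  · simpa
  · simp [hi]

theorem Finset.Nat.le_of_mem_antidiagonalTuple {N n : ℕ} {k : Fin N → ℕ}
    (hk : k ∈ Nat.antidiagonalTuple N n) (i : Fin N) : k i ≤ n :=
  Nat.mem_antidiagonalTuple.1 hk ▸ single_le_sum (fun _ _ => Nat.zero_le _) (mem_univ i)

theorem Fintype.sum_add_pi_single {ι M : Type*} [Fintype ι] [DecidableEq ι] [AddCommMonoid M]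
    (k : ι → M) (m : ι) (a : M) : ∑ i, (k + Pi.single m a : ι → M) i = ∑ i, k i + a := by
  simp [sum_add_distrib]

section CompleteHomogeneous

variable {R : Type*} [CommSemiring R]

noncomputable def hSymFn (n N : ℕ) (x : Fin N → R) : R :=
  ∑ k ∈ Nat.antidiagonalTuple N n, ∏ i, x i ^ k i

theorem hSymFn_snoc (n N : ℕ) (x : Fin N → R) (y : R) :
    hSymFn n (N + 1) (Fin.snoc x y) = ∑ ab ∈ antidiagonal n, y ^ ab.1 * hSymFn ab.2 N x := by
  unfold hSymFn
  simp_rw [mul_sum]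
  rw [sum_sigma']
  refine sum_bij'
    (fun k _ => ⟨(k (Fin.last N), ∑ i : Fin N, k i.castSucc), fun i => k i.castSucc⟩)
    (fun p _ => Fin.snoc p.2 p.1.1) ?_ ?_ ?_ ?_ ?_
  · intro k hk
    rw [Nat.mem_antidiagonalTuple, Fin.sum_univ_castSucc] at hk
    simp only [mem_sigma, HasAntidiagonal.mem_antidiagonal, Nat.mem_antidiagonalTuple, and_true]
    omega
  · rintro ⟨⟨a, b⟩, k⟩ hp
    simp only [mem_sigma, HasAntidiagonal.mem_antidiagonal, Nat.mem_antidiagonalTuple] at hp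
    simp only [Nat.mem_antidiagonalTuple, Fin.sum_univ_castSucc, Fin.snoc_castSucc, Fin.snoc_last]
    omega
  · intro k _
    exact Fin.snoc_init_self k
  · rintro ⟨⟨a, b⟩, k⟩ hp
    simp only [mem_sigma, HasAntidiagonal.mem_antidiagonal, Nat.mem_antidiagonalTuple] at hp
    simp [hp.2]
  · intro k _
    simp only [Fin.prod_univ_castSucc, Fin.snoc_castSucc, Fin.snoc_last]
    ring

/-- Each `x^κ` arises as `x m ^ a * x^k` with `k + a • eₘ = κ` for exactly the `κ m + 1`
values `a ≤ κ m`. -/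
theorem sum_antidiagonal_pow_mul_hSymFn (n N : ℕ) (x : Fin N → R) (m : Fin N) :
    ∑ ab ∈ antidiagonal n, x m ^ ab.1 * hSymFn ab.2 N x =
      ∑ κ ∈ Nat.antidiagonalTuple N n, ((κ m : R) + 1) * ∏ i, x i ^ κ i := by
  have hcount (κ : Fin N → ℕ) : ((κ m : R) + 1) * ∏ i, x i ^ κ i =
      ∑ _a ∈ range (κ m + 1), ∏ i, x i ^ κ i := by
    simp [add_mul]
  simp_rw [hSymFn, mul_sum, hcount]
  rw [sum_sigma', sum_sigma']
  refine sum_nbij' (fun p => ⟨p.2 + Pi.single m p.1.1, p.1.1⟩)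
    (fun q => ⟨(q.2, n - q.2), q.1 - Pi.single m q.2⟩) ?_ ?_ ?_ ?_ ?_
  · rintro ⟨⟨a, b⟩, k⟩ hp
    simp only [mem_sigma, HasAntidiagonal.mem_antidiagonal, Nat.mem_antidiagonalTuple] at hp
    simp only [mem_sigma, mem_range, Nat.mem_antidiagonalTuple, Fintype.sum_add_pi_single]
    simp only [Pi.add_apply, Pi.single_eq_same]
    omega
  · rintro ⟨κ, a⟩ hq
    simp only [mem_sigma, mem_range] at hq
    have hsub := Fintype.sum_add_pi_single (κ - Pi.single m a) m a
    rw [tsub_add_cancel_of_le (Pi.single_le_iff.2 (by omega))] at hsub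
    have hκm := Nat.le_of_mem_antidiagonalTuple hq.1 m
    rw [Nat.mem_antidiagonalTuple] at hq
    simp only [mem_sigma, HasAntidiagonal.mem_antidiagonal, Nat.mem_antidiagonalTuple]
    omega
  · rintro ⟨⟨a, b⟩, k⟩ hp
    simp only [mem_sigma, HasAntidiagonal.mem_antidiagonal] at hp
    simp [← hp.1]
  · rintro ⟨κ, a⟩ hq
    simp only [mem_sigma, mem_range] at hq
    simp [tsub_add_cancel_of_le (Pi.single_le_iff.2 (show a ≤ κ m by omega))]
  · rintro ⟨⟨a, b⟩, k⟩ -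
    simp only [Pi.add_apply, pow_add, prod_mul_distrib]
    simp [Pi.single_apply, mul_comm]

theorem sum_hSymFn_snoc_self (n N : ℕ) (x : Fin N → R) :
    ∑ m, hSymFn n (N + 1) (Fin.snoc x (x m)) = ((N + n : ℕ) : R) * hSymFn n N x := by
  simp_rw [hSymFn_snoc, sum_antidiagonal_pow_mul_hSymFn]
  rw [sum_comm, hSymFn, mul_sum]
  refine sum_congr rfl fun κ hκ => ?_
  rw [← sum_mul, sum_add_distrib, ← Nat.cast_sum, Nat.mem_antidiagonalTuple.1 hκ]
  simp [add_comm]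

end CompleteHomogeneous

theorem hSym_ofFn (n N : ℕ) (x : Fin N → ℂ) : hSym n (List.ofFn x) = hSymFn n N x := by
  have hcast : ∀ (M : ℕ) (e : M = N) (y : Fin M → ℂ), (∀ i, y i = x (Fin.cast e i)) →
      hSymFn n M y = hSymFn n N x := by
    rintro M rfl y hy
    rw [funext hy]
    rfl
  exact hcast _ List.length_ofFn _ (List.get_ofFn x)

theorem norm_hSymFn_le {R : Type*} [NormedCommRing R] [NormOneClass R] (n N : ℕ)
    (x : Fin N → R) : ‖hSymFn n N x‖ ≤ (∑ i, ‖x i‖) ^ n := by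
  rw [sum_pow_eq_sum_piAntidiag, piAntidiag_univ_fin_eq_antidiagonalTuple]
  refine (norm_sum_le _ _).trans (sum_le_sum fun k _ => ?_)
  calc ‖∏ i, x i ^ k i‖ ≤ ∏ i, ‖x i‖ ^ k i :=
        (Finset.norm_prod_le _ _).trans
          (prod_le_prod (fun _ _ => norm_nonneg _) fun i _ => norm_pow_le _ _)
    _ ≤ (Nat.multinomial univ k : ℝ) * ∏ i, ‖x i‖ ^ k i :=
        le_mul_of_one_le_left (by positivity) (by exact_mod_cast Nat.multinomial_pos _ _)

noncomputable def divDiffTerm (f : ℂ → ℂ) (xs : List ℂ) (n : ℕ) : ℂ :=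
  iteratedDeriv (xs.length - 1 + n) f 0 / (Nat.factorial (xs.length - 1 + n) : ℂ) * hSym n xs

theorem divDiff_eq_tsum_divDiffTerm (f : ℂ → ℂ) (xs : List ℂ) :
    divDiff f xs = ∑' n, divDiffTerm f xs n := rfl

theorem divDiffTerm_ofFn (f : ℂ → ℂ) {q : ℕ} (x : Fin (q + 1) → ℂ) (n : ℕ) :
    divDiffTerm f (List.ofFn x) n =
      iteratedDeriv (q + n) f 0 / (Nat.factorial (q + n) : ℂ) * hSymFn n (q + 1) x := by
  rw [divDiffTerm, hSym_ofFn, List.length_ofFn, Nat.add_sub_cancel]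

theorem sum_divDiffTerm_snoc_self (f : ℂ → ℂ) {q : ℕ} (x : Fin (q + 1) → ℂ) (n : ℕ) :
    ∑ m, divDiffTerm f (List.ofFn x ++ [x m]) n = divDiffTerm (deriv f) (List.ofFn x) n := by
  simp_rw [List.ofFn_append_singleton, divDiffTerm_ofFn, ← mul_sum, sum_hSymFn_snoc_self]
  rw [show q + 1 + n = q + n + 1 by omega, iteratedDeriv_succ', Nat.factorial_succ]
  have : ((q + n + 1 : ℕ) : ℂ) ≠ 0 := Nat.cast_ne_zero.2 (Nat.succ_ne_zero _)
  rw [Nat.cast_mul]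
  field_simp

theorem sum_divDiff_snoc_self (f : ℂ → ℂ) {q : ℕ} (x : Fin (q + 1) → ℂ)
    (hf : ∀ m, Summable (divDiffTerm f (List.ofFn x ++ [x m]))) :
    ∑ m, divDiff f (List.ofFn x ++ [x m]) = divDiff (deriv f) (List.ofFn x) := by
  simp_rw [divDiff_eq_tsum_divDiffTerm]
  rw [← Summable.tsum_finsetSum fun m _ => hf m]
  exact tsum_congr (sum_divDiffTerm_snoc_self f x)

theorem divDiff_const_mul (c : ℂ) (f : ℂ → ℂ) (xs : List ℂ) :
    divDiff (fun z => c * f z) xs = c * divDiff f xs := by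
  simp only [divDiff, iteratedDeriv_const_mul_field, mul_div_assoc, mul_assoc, tsum_mul_left]

theorem summable_divDiffTerm_cexp (c : ℂ) (xs : List ℂ) :
    Summable (divDiffTerm (fun z => Complex.exp (c * z)) xs) := by
  set L := xs.length - 1
  set S := ∑ i, ‖xs.get i‖
  refine Summable.of_norm_bounded ((Real.summable_pow_div_factorial (‖c‖ * S)).mul_left (‖c‖ ^ L))
    fun n => ?_
  have hfac : (Nat.factorial n : ℝ) ≤ Nat.factorial (L + n) := by
    exact_mod_cast Nat.factorial_le (Nat.le_add_left n L)
  have hS : ‖hSym n xs‖ ≤ S ^ n := norm_hSymFn_le n _ xs.get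
  simp only [divDiffTerm, iteratedDeriv_cexp_const_mul, mul_zero, Complex.exp_zero, mul_one,
    norm_mul, norm_div, norm_pow, Complex.norm_natCast]
  calc ‖c‖ ^ (L + n) / (Nat.factorial (L + n) : ℝ) * ‖hSym n xs‖
      ≤ ‖c‖ ^ (L + n) / (Nat.factorial n : ℝ) * S ^ n := by gcongr
    _ = ‖c‖ ^ L * ((‖c‖ * S) ^ n / Nat.factorial n) := by ring

theorem sum_expDD_snoc_self (c : ℂ) {q : ℕ} (x : Fin (q + 1) → ℂ) :
    ∑ m, expDD c (List.ofFn x ++ [x m]) = c * expDD c (List.ofFn x) := by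
  have hderiv : deriv (fun z => Complex.exp (c * z)) = fun z => c * Complex.exp (c * z) := by
    funext z
    simpa [mul_comm] using ((hasDerivAt_id z).const_mul c).cexp.deriv
  rw [expDD, ← divDiff_const_mul, ← hderiv]
  exact sum_divDiff_snoc_self _ x fun m => summable_divDiffTerm_cexp c _

theorem expDD_freq_shift_general (t : ℝ) (j : ℕ) (x : Fin (j + 1) → ℂ) :
    (t : ℂ) * expDD (-(t : ℂ)) (List.ofFn x) =
      - ∑ m : Fin (j + 1), expDD (-(t : ℂ)) (List.ofFn x ++ [x m]) := by
  rw [sum_expDD_snoc_self]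
  ring

/-- Frequency-shift identity:
`t · e^{−t[x₀,...,x_j]} = −Σ_{m=0}^{j} e^{−t[x₀,...,x_j,x_m]}`. -/
theorem expDD_freq_shift (t : ℝ) (ht : 0 < t) (j : ℕ) (x : Fin (j + 1) → ℂ) :
    (t : ℂ) * expDD (-(t : ℂ)) (List.ofFn x) =
      - ∑ m : Fin (j + 1), expDD (-(t : ℂ)) (List.ofFn x ++ [x m]) :=
  expDD_freq_shift_general t j x
end

section
/- Let H be a Hermitian matrix with H = Σ_{P ∈ S_H} D_P P a PMR decomposition over a regular permutation group G (S_H the subset of G with D_P ≠ 0), and let P̃ ∈ G with P̃ ∉ ⟨S_H⟩ (the subgroup generated by the permutations appearing in H). Then for any diagonal matrix D̃, Tr[D̃ P̃ e^{−βH}] = 0 for all β. -/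
open Matrix

/-- Permutation matrix of `σ` in the column convention: `P_σ e_y = e_{σ y}`. -/
def permMatrix {d : ℕ} (σ : Equiv.Perm (Fin d)) : Matrix (Fin d) (Fin d) ℂ :=
  Matrix.of fun i j => if σ j = i then 1 else 0

/-!
The matrices whose `(i, j)` entry vanishes unless `i` and `j` lie in the same orbit of
`K = ⟨S_H⟩` form a closed subalgebra. `H` lies in it, hence so does `exp (-β • H)`. The trace of
`D̃ * P̃ * A` only involves the entries `A k (P̃ k)`, and `k`, `P̃ k` are never in the same
`K`-orbit: `σ (P̃ k) = k` with `σ ∈ K` makes `σ * P̃ ∈ G` fix a point, so `σ * P̃ = 1` by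
freeness and `P̃ = σ⁻¹ ∈ K`.
-/

open MulAction

theorem Equiv.Perm.not_orbitRel_apply_of_notMem {n : Type*} {G K : Subgroup (Equiv.Perm n)}
    (hfree : ∀ σ ∈ G, σ ≠ 1 → ∀ x : n, σ x ≠ x) (hKG : K ≤ G) {τ : Equiv.Perm n} (hτG : τ ∈ G)
    (hτK : τ ∉ K) (x : n) : ¬ orbitRel K n x (τ x) := by
  rintro ⟨σ, hσ⟩
  have hστ : (σ : Equiv.Perm n) * τ = 1 := by
    by_contra hne
    exact hfree _ (G.mul_mem (hKG σ.2) hτG) hne x hσ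
  exact hτK (eq_inv_of_mul_eq_one_right hστ ▸ K.inv_mem σ.2)

namespace Matrix

variable {n : Type*} [Fintype n] [DecidableEq n]

def blockSubalgebra (R : Type*) [CommSemiring R] (r : Setoid n) :
    Subalgebra R (Matrix n n R) where
  carrier := {A | ∀ i j, A i j ≠ 0 → r i j}
  mul_mem' {A B} hA hB i j hAB := by
    obtain ⟨k, -, hk⟩ := Finset.exists_ne_zero_of_sum_ne_zero hAB
    exact r.trans (hA i k (left_ne_zero_of_mul hk)) (hB k j (right_ne_zero_of_mul hk))
  add_mem' {A B} hA hB i j hAB := by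
    by_cases hA0 : A i j = 0
    · exact hB i j (by simpa [hA0] using hAB)
    · exact hA i j hA0
  algebraMap_mem' c i j hc := by
    obtain rfl : i = j := by
      by_contra hij
      exact hc (by simp [algebraMap_eq_diagonal, diagonal_apply_ne _ hij])
    exact r.refl i

theorem isClosed_blockSubalgebra {𝕜 : Type*} [NontriviallyNormedField 𝕜] [CompleteSpace 𝕜]
    (r : Setoid n) : IsClosed (blockSubalgebra 𝕜 r : Set (Matrix n n 𝕜)) :=
  (Subalgebra.toSubmodule (blockSubalgebra 𝕜 r)).closed_of_finiteDimensional

theorem IsDiag.mul_permMatrix_mem_blockSubalgebra {d : ℕ} {D : Matrix (Fin d) (Fin d) ℂ}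
    (hD : D.IsDiag) {K : Subgroup (Equiv.Perm (Fin d))} {σ : Equiv.Perm (Fin d)} (hσ : σ ∈ K) :
    D * permMatrix σ ∈ blockSubalgebra ℂ (orbitRel K (Fin d)) := by
  intro i j hij
  obtain rfl : i = σ j := by
    by_contra hne
    exact hij (by simp [mul_apply, permMatrix, hD hne])
  exact ⟨⟨σ, hσ⟩, rfl⟩

theorem IsDiag.trace_mul_permMatrix_mul {d : ℕ} {D : Matrix (Fin d) (Fin d) ℂ} (hD : D.IsDiag)
    (τ : Equiv.Perm (Fin d)) (A : Matrix (Fin d) (Fin d) ℂ) :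
    (D * permMatrix τ * A).trace = ∑ k, D (τ k) (τ k) * A k (τ k) := by
  have hDP : ∀ i k, (D * permMatrix τ) i k = D i (τ k) := fun i k => by
    simp [mul_apply, permMatrix]
  simp only [trace, diag_apply, mul_apply (M := D * permMatrix τ), hDP]
  rw [Finset.sum_comm]
  refine Finset.sum_congr rfl fun k _ => Finset.sum_eq_single (τ k) (fun i _ hi => ?_) (by simp)
  rw [hD hi, zero_mul]

theorem IsDiag.trace_mul_permMatrix_mul_eq_zero {d : ℕ} {D : Matrix (Fin d) (Fin d) ℂ}
    (hD : D.IsDiag) {r : Setoid (Fin d)} {τ : Equiv.Perm (Fin d)} (hτ : ∀ x, ¬ r x (τ x))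
    {A : Matrix (Fin d) (Fin d) ℂ} (hA : A ∈ blockSubalgebra ℂ r) :
    (D * permMatrix τ * A).trace = 0 := by
  rw [hD.trace_mul_permMatrix_mul]
  refine Finset.sum_eq_zero fun k _ => ?_
  rw [not_imp_comm.mp (hA k (τ k)) (hτ k), mul_zero]

end Matrix

theorem pmr_permutation_outside_closure_trace_zero_general
    (d : ℕ) (G : Subgroup (Equiv.Perm (Fin d))) [Fintype ↥G]
    (hfree : ∀ σ ∈ G, σ ≠ 1 → ∀ x : Fin d, σ x ≠ x)
    (D : G → Matrix (Fin d) (Fin d) ℂ) (hD : ∀ σ : G, (D σ).IsDiag)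
    (H : Matrix (Fin d) (Fin d) ℂ)
    (hH : H = ∑ σ : G, D σ * permMatrix (σ : Equiv.Perm (Fin d)))
    (Pt : G)
    (hPt : (Pt : Equiv.Perm (Fin d)) ∉
      Subgroup.closure {p : Equiv.Perm (Fin d) | ∃ σ : G, (σ : Equiv.Perm (Fin d)) = p ∧ D σ ≠ 0})
    (Dt : Matrix (Fin d) (Fin d) ℂ) (hDt : Dt.IsDiag) (β : ℂ) :
    (Dt * permMatrix (Pt : Equiv.Perm (Fin d)) * NormedSpace.exp (-β • H)).trace = 0 := by
  set K :=
    Subgroup.closure {p : Equiv.Perm (Fin d) | ∃ σ : G, (σ : Equiv.Perm (Fin d)) = p ∧ D σ ≠ 0}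
  have hKG : K ≤ G := Subgroup.closure_le _ |>.mpr <| by rintro _ ⟨σ, rfl, -⟩; exact σ.2
  have hHK : H ∈ blockSubalgebra ℂ (orbitRel K (Fin d)) := hH ▸ Subalgebra.sum_mem _ fun σ _ => by
    by_cases hσ : D σ = 0
    · simp [hσ]
    · exact (hD σ).mul_permMatrix_mem_blockSubalgebra (Subgroup.subset_closure ⟨σ, rfl, hσ⟩)
  have hexp : NormedSpace.exp (-β • H) ∈ blockSubalgebra ℂ (orbitRel K (Fin d)) :=
    NormedSpace.exp_mem (R := ℂ) (isClosed_blockSubalgebra _) (Subalgebra.smul_mem _ hHK _)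
  exact hDt.trace_mul_permMatrix_mul_eq_zero
    (Equiv.Perm.not_orbitRel_apply_of_notMem hfree hKG Pt.2 hPt) hexp

/-- Let `H` be Hermitian with PMR decomposition `H = Σ_{σ ∈ G} D_σ P_σ` over a regular
group `G`, and let `P̃ ∈ G` lie outside the subgroup generated by the permutations
appearing in `H` (those with `D_σ ≠ 0`). Then for any diagonal `D̃` and any `β`,
`Tr[D̃ P̃ e^{−βH}] = 0`. -/
theorem pmr_permutation_outside_closure_trace_zero
    (d : ℕ) (G : Subgroup (Equiv.Perm (Fin d))) [Fintype ↥G]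
    (htrans : ∀ x y : Fin d, ∃ σ ∈ G, σ x = y)
    (hfree : ∀ σ ∈ G, σ ≠ 1 → ∀ x : Fin d, σ x ≠ x)
    (D : G → Matrix (Fin d) (Fin d) ℂ) (hD : ∀ σ : G, (D σ).IsDiag)
    (H : Matrix (Fin d) (Fin d) ℂ)
    (hH : H = ∑ σ : G, D σ * permMatrix (σ : Equiv.Perm (Fin d)))
    (hHerm : H.IsHermitian)
    (Pt : G)
    (hPt : (Pt : Equiv.Perm (Fin d)) ∉
      Subgroup.closure {p : Equiv.Perm (Fin d) | ∃ σ : G, (σ : Equiv.Perm (Fin d)) = p ∧ D σ ≠ 0})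
    (Dt : Matrix (Fin d) (Fin d) ℂ) (hDt : Dt.IsDiag) (β : ℂ) :
    (Dt * permMatrix (Pt : Equiv.Perm (Fin d)) * NormedSpace.exp (-β • H)).trace = 0 :=
  pmr_permutation_outside_closure_trace_zero_general d G hfree D hD H hH Pt hPt Dt hDt β
end
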